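/- arXiv:1811.01185 — 2 statements merged into one kernel-verified Lean document; each statement's English description precedes it below -/
import Mathlib

section
/- Let 0 = t₀ < t₁ < ⋯ < t_l be switching times, let σ assign to each interval [t_i, t_{i+1}) a mode, and suppose V : [0,∞) → ℝ is nonnegative, satisfies V(t) ≤ exp(-λ_{σ(t_i)}(t - t_i)) V(t_i) for all t ∈ [t_i, t_{i+1}), and satisfies the jump condition V(t_i) ≤ μ_i · lim_{t→t_i⁻} V(t) at each switching time t_i (i = 1,…,l), where each μ_i > 1 and each λ_p > 0. Then for all t ∈ [t_l, t_{l+1}), V(t) ≤ (∏_{k=1}^{l} μ_k) · exp(-λ_{σ(t_l)}(t - t_l) - ∑_{i=0}^{l-1} λ_{σ(t_i)}(t_{i+1} - t_i)) · V(0). -/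
/-!
Induction on the interval index. On `[t n, t (n + 1))` the bound is a continuous envelope in `s`,
so it passes to the left limit of `V` at `t (n + 1)`; the jump multiplies it by `μ (n + 1)`, and
the decay on the next interval adds the exponential factor of the next envelope.
-/

open Filter Set Topology

/-- Envelope that bounds `V s / V (t 0)` on the `n`-th interval `[t n, t (n + 1))`, for decay
rates `r` and jump factors `μ`. -/
noncomputable def switchedEnvelope (t r μ : ℕ → ℝ) (n : ℕ) (s : ℝ) : ℝ :=
  (∏ i ∈ Finset.Icc 1 n, μ i) *
    Real.exp (-r n * (s - t n) - ∑ i ∈ Finset.range n, r i * (t (i + 1) - t i))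

section

variable (t r μ : ℕ → ℝ)

theorem switchedEnvelope_zero (s : ℝ) :
    switchedEnvelope t r μ 0 s = Real.exp (-r 0 * (s - t 0)) := by
  simp [switchedEnvelope]

theorem switchedEnvelope_succ (n : ℕ) (s : ℝ) :
    switchedEnvelope t r μ (n + 1) s =
      Real.exp (-r (n + 1) * (s - t (n + 1))) *
        (μ (n + 1) * switchedEnvelope t r μ n (t (n + 1))) := by
  simp only [switchedEnvelope, Finset.prod_Icc_succ_top (Nat.le_add_left 1 n),
    Finset.sum_range_succ]
  rw [show ∀ a b c d : ℝ, a - (b + c * d) = a + (-c * d - b) by intros; ring, Real.exp_add]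
  ring

theorem continuous_switchedEnvelope (n : ℕ) : Continuous (switchedEnvelope t r μ n) := by
  unfold switchedEnvelope
  fun_prop

end

theorem le_of_tendsto_nhdsLT_of_le_on_Ioo {f g : ℝ → ℝ} {a b L : ℝ} (hab : a < b)
    (hf : Tendsto f (𝓝[<] b) (𝓝 L)) (hg : ContinuousWithinAt g (Iio b) b)
    (hfg : ∀ s ∈ Ioo a b, f s ≤ g s) : L ≤ g b :=
  le_of_tendsto_of_tendsto hf hg <|
    eventually_of_mem (Ioo_mem_nhdsLT hab) hfg

theorem le_switchedEnvelope_succ {t r μ : ℕ → ℝ} {V : ℝ → ℝ} {n : ℕ} {c L : ℝ}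
    (ht : t n < t (n + 1)) (hμ : 0 ≤ μ (n + 1))
    (hV : ∀ s ∈ Ico (t n) (t (n + 1)), V s ≤ switchedEnvelope t r μ n s * c)
    (hleft : Tendsto V (𝓝[<] t (n + 1)) (𝓝 L)) (hjump : V (t (n + 1)) ≤ μ (n + 1) * L)
    (hdecay : ∀ s ∈ Ico (t (n + 1)) (t (n + 2)),
      V s ≤ Real.exp (-r (n + 1) * (s - t (n + 1))) * V (t (n + 1))) :
    ∀ s ∈ Ico (t (n + 1)) (t (n + 2)), V s ≤ switchedEnvelope t r μ (n + 1) s * c := by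
  have hL : L ≤ switchedEnvelope t r μ n (t (n + 1)) * c :=
    le_of_tendsto_nhdsLT_of_le_on_Ioo (g := fun s => switchedEnvelope t r μ n s * c) ht hleft
      ((continuous_switchedEnvelope t r μ n).mul continuous_const).continuousWithinAt
      fun s hs => hV s (Ioo_subset_Ico_self hs)
  intro s hs
  calc V s ≤ Real.exp (-r (n + 1) * (s - t (n + 1))) * V (t (n + 1)) := hdecay s hs
    _ ≤ Real.exp (-r (n + 1) * (s - t (n + 1))) *
          (μ (n + 1) * (switchedEnvelope t r μ n (t (n + 1)) * c)) := by
      gcongr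
      exact hjump.trans (mul_le_mul_of_nonneg_left hL hμ)
    _ = switchedEnvelope t r μ (n + 1) s * c := by
      rw [switchedEnvelope_succ]
      ring

theorem le_switchedEnvelope {t r μ : ℕ → ℝ} {V : ℝ → ℝ} {l : ℕ} {Vleft : ℕ → ℝ}
    (ht : ∀ i, i ≤ l → t i < t (i + 1)) (hμ : ∀ i, 1 ≤ i → i ≤ l → 0 ≤ μ i)
    (hdecay : ∀ i, i ≤ l → ∀ s ∈ Ico (t i) (t (i + 1)),
      V s ≤ Real.exp (-r i * (s - t i)) * V (t i))
    (hleft : ∀ i, 1 ≤ i → i ≤ l → Tendsto V (𝓝[<] t i) (𝓝 (Vleft i)))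
    (hjump : ∀ i, 1 ≤ i → i ≤ l → V (t i) ≤ μ i * Vleft i) :
    ∀ n ≤ l, ∀ s ∈ Ico (t n) (t (n + 1)), V s ≤ switchedEnvelope t r μ n s * V (t 0) := by
  intro n hn
  induction n with
  | zero =>
    simpa only [switchedEnvelope_zero] using hdecay 0 hn
  | succ n ih =>
    have h1 : 1 ≤ n + 1 := Nat.le_add_left 1 n
    exact le_switchedEnvelope_succ (ht n (by omega)) (hμ _ h1 hn) (ih (by omega))
      (hleft _ h1 hn) (hjump _ h1 hn) (hdecay _ hn)

theorem switched_recursive_bound_general {S : Type*} (l : ℕ)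
    (t : ℕ → ℝ) (ht0 : t 0 = 0)
    (htmono : ∀ i, i ≤ l → t i < t (i + 1))
    (σm : ℕ → S) (lam : S → ℝ)
    (μ : ℕ → ℝ) (hμ : ∀ i, 1 ≤ i → i ≤ l → 1 < μ i)
    (V : ℝ → ℝ)
    (hdecay : ∀ i, i ≤ l → ∀ s ∈ Set.Ico (t i) (t (i + 1)),
      V s ≤ Real.exp (-(lam (σm i)) * (s - t i)) * V (t i))
    (Vleft : ℕ → ℝ)
    (hleft : ∀ i, 1 ≤ i → i ≤ l →
      Filter.Tendsto V (nhdsWithin (t i) (Set.Iio (t i))) (nhds (Vleft i)))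
    (hjump : ∀ i, 1 ≤ i → i ≤ l → V (t i) ≤ μ i * Vleft i) :
    ∀ s ∈ Set.Ico (t l) (t (l + 1)),
      V s ≤ (∏ i ∈ Finset.Icc 1 l, μ i) *
        Real.exp (-(lam (σm l)) * (s - t l)
          - ∑ i ∈ Finset.range l, lam (σm i) * (t (i + 1) - t i)) * V 0 := by
  have h := le_switchedEnvelope (r := fun i => lam (σm i)) htmono
    (fun i h1 h2 => (zero_lt_one.trans (hμ i h1 h2)).le) hdecay hleft hjump l le_rfl
  simpa only [switchedEnvelope, ht0] using h

/-- Recursive multiplicative bound (eq. (17)) obtained by iterating per-interval exponential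
decay and per-switch multiplicative jump bounds for a switched system. -/
theorem switched_recursive_bound {S : Type*} (l : ℕ)
    (t : ℕ → ℝ) (ht0 : t 0 = 0)
    (htmono : ∀ i, i ≤ l → t i < t (i + 1))
    (σm : ℕ → S) (lam : S → ℝ) (hlam : ∀ p, 0 < lam p)
    (μ : ℕ → ℝ) (hμ : ∀ i, 1 ≤ i → i ≤ l → 1 < μ i)
    (V : ℝ → ℝ) (hVnonneg : ∀ s, 0 ≤ V s)
    (hdecay : ∀ i, i ≤ l → ∀ s ∈ Set.Ico (t i) (t (i + 1)),
      V s ≤ Real.exp (-(lam (σm i)) * (s - t i)) * V (t i))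
    (Vleft : ℕ → ℝ)
    (hleft : ∀ i, 1 ≤ i → i ≤ l →
      Filter.Tendsto V (nhdsWithin (t i) (Set.Iio (t i))) (nhds (Vleft i)))
    (hjump : ∀ i, 1 ≤ i → i ≤ l → V (t i) ≤ μ i * Vleft i) :
    ∀ s ∈ Set.Ico (t l) (t (l + 1)),
      V s ≤ (∏ i ∈ Finset.Icc 1 l, μ i) *
        Real.exp (-(lam (σm l)) * (s - t l)
          - ∑ i ∈ Finset.range l, lam (σm i) * (t (i + 1) - t i)) * V 0 :=
  switched_recursive_bound_general l t ht0 htmono σm lam μ hμ V hdecay Vleft hleft hjump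
end

section
/- Let S be a finite set of modes, and index the occurring ordered pairs (p,q) ∈ S × S with p ≠ q by k = 1,…,m; for each k let μ_k > 1 (the constant μ_{p|q} of the pair) and λ_k > 0 (the constant λ_p) be constants, and let N_k ∈ ℝ≥0, T_k ∈ ℝ≥0, N₀_k ∈ ℝ≥0, τ_k > 0 with N_k ≤ N₀_k + T_k/τ_k and τ_k ≥ ln(μ_k)/λ_k. Then (∏_{k=1}^m μ_k^{N_k}) · exp(-∑_{k=1}^m λ_k T_k) ≤ exp(∑_{k=1}^m N₀_k ln μ_k) · exp(max_k (ln(μ_k)/τ_k - λ_k) · ∑_{k=1}^m T_k), and in particular this product is bounded above by exp(∑_{k=1}^m N₀_k ln μ_k). -/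
/-- Multi-pattern average dwell time estimate (used in the proof of Theorem 1, SBASDT). -/
theorem multi_pattern_adt_estimate (m : ℕ) (hm : 0 < m)
    (μ lam N T N₀ τ : Fin m → ℝ)
    (hμ : ∀ k, 1 < μ k) (hlam : ∀ k, 0 < lam k)
    (hN : ∀ k, 0 ≤ N k) (hT : ∀ k, 0 ≤ T k) (hN₀ : ∀ k, 0 ≤ N₀ k)
    (hτ : ∀ k, 0 < τ k)
    (hcount : ∀ k, N k ≤ N₀ k + T k / τ k)
    (hdwell : ∀ k, Real.log (μ k) / lam k ≤ τ k) :
    (∏ k, μ k ^ N k) * Real.exp (-∑ k, lam k * T k) ≤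
        Real.exp (∑ k, N₀ k * Real.log (μ k)) *
          Real.exp ((Finset.univ.sup' (Finset.univ_nonempty_iff.mpr (Fin.pos_iff_nonempty.mp hm))
            (fun k => Real.log (μ k) / τ k - lam k)) * ∑ k, T k) ∧
      (∏ k, μ k ^ N k) * Real.exp (-∑ k, lam k * T k) ≤
        Real.exp (∑ k, N₀ k * Real.log (μ k)) := by
  have hne : (Finset.univ : Finset (Fin m)).Nonempty :=
    Finset.univ_nonempty_iff.mpr (Fin.pos_iff_nonempty.mp hm)
  set M := Finset.univ.sup' hne (fun k => Real.log (μ k) / τ k - lam k) with hMdef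
  have hlogpos : ∀ k, 0 < Real.log (μ k) := fun k => Real.log_pos (hμ k)
  have hterm : ∀ k : Fin m, Real.log (μ k) / τ k - lam k ≤ 0 := by
    intro k
    have h1 : Real.log (μ k) ≤ τ k * lam k := by
      have := (div_le_iff₀ (hlam k)).mp (hdwell k)
      linarith
    have h2 : Real.log (μ k) / τ k ≤ lam k := by
      rw [div_le_iff₀ (hτ k)]
      linarith
    linarith
  have hMle : M ≤ 0 := Finset.sup'_le hne _ (fun k _ => hterm k)
  have hprod : (∏ k, μ k ^ N k) = Real.exp (∑ k, N k * Real.log (μ k)) := by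
    rw [Real.exp_sum]
    refine Finset.prod_congr rfl (fun k _ => ?_)
    rw [Real.rpow_def_of_pos (lt_trans one_pos (hμ k)), mul_comm]
  have key : (∑ k, N k * Real.log (μ k)) + (-∑ k, lam k * T k) ≤
      (∑ k, N₀ k * Real.log (μ k)) + M * ∑ k, T k := by
    have h1 : ∀ k ∈ (Finset.univ : Finset (Fin m)),
        N k * Real.log (μ k) - lam k * T k ≤ N₀ k * Real.log (μ k) + M * T k := by
      intro k _
      have hle : N k * Real.log (μ k) ≤ (N₀ k + T k / τ k) * Real.log (μ k) :=
        mul_le_mul_of_nonneg_right (hcount k) (le_of_lt (hlogpos k))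
      have hMk : Real.log (μ k) / τ k - lam k ≤ M :=
        Finset.le_sup' (fun k => Real.log (μ k) / τ k - lam k) (Finset.mem_univ k)
      have hTk : T k * (Real.log (μ k) / τ k - lam k) ≤ T k * M :=
        mul_le_mul_of_nonneg_left hMk (hT k)
      have e1 : (N₀ k + T k / τ k) * Real.log (μ k)
          = N₀ k * Real.log (μ k) + T k * (Real.log (μ k) / τ k) := by ring
      have e2 : T k * (Real.log (μ k) / τ k - lam k)
          = T k * (Real.log (μ k) / τ k) - lam k * T k := by ring
      nlinarith [hle, hTk]
    have hsum := Finset.sum_le_sum h1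
    rw [Finset.sum_sub_distrib, Finset.sum_add_distrib, ← Finset.mul_sum] at hsum
    linarith
  constructor
  · rw [hprod, ← Real.exp_add, ← Real.exp_add]
    exact Real.exp_le_exp.mpr key
  · rw [hprod, ← Real.exp_add]
    refine Real.exp_le_exp.mpr ?_
    have hTsum : 0 ≤ ∑ k, T k := Finset.sum_nonneg (fun k _ => hT k)
    have : M * ∑ k, T k ≤ 0 := mul_nonpos_of_nonpos_of_nonneg hMle hTsum
    linarith
end
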